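/- For every finite simple graph G with at least 3 vertices, no isolated vertices, and no connected component isomorphic to K₂, and for every p ≥ 1, the p-fold iterated Mycielskian satisfies Dist′(μ^p(G)) ≤ Dist′(G). -/
import Mathlib


open SimpleGraph

universe u

/-- A distinguishing edge coloring: no nontrivial automorphism preserves the coloring. -/
def IsDistEdgeColoring {V : Type u} (G : SimpleGraph V) {C : Type*} (c : G.edgeSet → C) : Prop :=
  ∀ φ : G ≃g G, (∀ e : G.edgeSet, c (φ.mapEdgeSet e) = c e) → ∀ v, φ v = v

/-- The distinguishing index: least number of colors in a distinguishing edge coloring. -/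
noncomputable def distIndex {V : Type u} (G : SimpleGraph V) : ℕ :=
  sInf {k : ℕ | ∃ c : G.edgeSet → Fin k, IsDistEdgeColoring G c}

/-- The star `K_{1,m}` with center `0`. -/
def starGraph (m : ℕ) : SimpleGraph (Fin (m + 1)) :=
  SimpleGraph.fromRel fun a _ => a = 0

/-- The Mycielskian: `Sum.inl a` are original vertices, `Sum.inr (Sum.inl a)` their
shadows, and `Sum.inr (Sum.inr _)` the root. -/
def myc {V : Type u} (G : SimpleGraph V) : SimpleGraph (V ⊕ V ⊕ PUnit.{u+1}) :=
  SimpleGraph.fromRel fun x y =>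
    match x, y with
    | Sum.inl a, Sum.inl b => G.Adj a b
    | Sum.inl a, Sum.inr (Sum.inl b) => G.Adj a b
    | Sum.inr (Sum.inl _), Sum.inr (Sum.inr _) => True
    | _, _ => False

/-- The generalized Mycielskian with `t` extra levels: `Sum.inl (j, a)` is the level-`j`
copy of vertex `a` (level `0` being the original vertices), and `Sum.inr _` is the root. -/
def genMyc {V : Type u} (G : SimpleGraph V) (t : ℕ) :
    SimpleGraph ((Fin (t + 1) × V) ⊕ PUnit.{u+1}) :=
  SimpleGraph.fromRel fun x y =>
    match x, y with
    | Sum.inl (j, a), Sum.inl (k, b) =>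
        ((j.val = 0 ∧ k.val = 0) ∨ k.val = j.val + 1) ∧ G.Adj a b
    | Sum.inl (j, _), Sum.inr _ => j.val = t
    | _, _ => False

/-- The `p`-fold iterated Mycielskian, bundled with its vertex type. -/
def iterMyc {V : Type u} (G : SimpleGraph V) : (p : ℕ) → Σ W : Type u, SimpleGraph W
  | 0 => ⟨V, G⟩
  | p + 1 => ⟨_, myc (iterMyc G p).2⟩

namespace MycAux

variable {V : Type u} {G : SimpleGraph V}

/-- v-layer embedding -/
abbrev vL : V → V ⊕ V ⊕ PUnit.{u+1} := Sum.inl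
/-- u-layer embedding -/
abbrev uL : V → V ⊕ V ⊕ PUnit.{u+1} := fun a => Sum.inr (Sum.inl a)
/-- root -/
abbrev rt : V ⊕ V ⊕ PUnit.{u+1} := Sum.inr (Sum.inr PUnit.unit)

@[simp] lemma adj_vv {a b : V} : (myc G).Adj (vL a) (vL b) ↔ G.Adj a b := by
  rw [myc, fromRel_adj]
  constructor
  · rintro ⟨-, h | h⟩; exact h; exact h.symm
  · intro h; exact ⟨fun he => h.ne (Sum.inl_injective he), Or.inl h⟩

@[simp] lemma adj_vu {a b : V} : (myc G).Adj (vL a) (uL b) ↔ G.Adj a b := by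
  simp [myc, fromRel_adj]

@[simp] lemma adj_uv {a b : V} : (myc G).Adj (uL a) (vL b) ↔ G.Adj b a := by
  simp [myc, fromRel_adj]

@[simp] lemma adj_uu {a b : V} : ¬ (myc G).Adj (uL a) (uL b) := by
  simp [myc, fromRel_adj]

@[simp] lemma adj_uw {a : V} : (myc G).Adj (uL a) rt := by
  simp [myc, fromRel_adj]

@[simp] lemma adj_wu {a : V} : (myc G).Adj rt (uL a) := by
  simp [myc, fromRel_adj]

@[simp] lemma adj_vw {a : V} : ¬ (myc G).Adj (vL a) rt := by
  simp [myc, fromRel_adj]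

@[simp] lemma adj_wv {a : V} : ¬ (myc G).Adj rt (vL a) := by
  simp [myc, fromRel_adj]

lemma vL_inj : Function.Injective (vL : V → _) := fun _ _ h => Sum.inl_injective h
lemma uL_inj : Function.Injective (uL : V → _) := fun _ _ h =>
  Sum.inl_injective (Sum.inr_injective h)

lemma nb_rt : (myc G).neighborSet rt = Set.range (uL : V → _) := by
  ext x
  rcases x with a | a | t
  · simpa [neighborSet] using fun c (h : _ = _) => Sum.inl_ne_inr h.symm
  · simp [neighborSet]
  · rcases t
    simp only [neighborSet, Set.mem_setOf_eq, (myc G).irrefl, false_iff, Set.mem_range]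
    intro ⟨c, h⟩
    exact absurd (Sum.inr_injective h) (by simp)

lemma nb_v (a : V) :
    (myc G).neighborSet (vL a) = vL '' G.neighborSet a ∪ uL '' G.neighborSet a := by
  ext x
  rcases x with b | b | t
  · constructor
    · intro h; exact Or.inl ⟨b, adj_vv.1 h, rfl⟩
    · rintro (⟨c, hc, hcb⟩ | ⟨c, hc, hcb⟩)
      · cases Sum.inl_injective hcb; exact adj_vv.2 hc
      · exact absurd hcb (by simp)
  · constructor
    · intro h; exact Or.inr ⟨b, adj_vu.1 h, rfl⟩
    · rintro (⟨c, hc, hcb⟩ | ⟨c, hc, hcb⟩)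
      · exact absurd hcb (by simp)
      · cases Sum.inl_injective (Sum.inr_injective hcb); exact adj_vu.2 hc
  · rcases t
    constructor
    · intro h; exact absurd h (adj_vw (G := G))
    · rintro (⟨c, _, hcb⟩ | ⟨c, _, hcb⟩) <;> exact absurd hcb (by simp)

lemma nb_u (a : V) :
    (myc G).neighborSet (uL a) = vL '' G.neighborSet a ∪ {rt} := by
  ext x
  rcases x with b | b | t
  · constructor
    · intro h; exact Or.inl ⟨b, (adj_uv.1 h).symm, rfl⟩
    · rintro (⟨c, hc, hcb⟩ | hcb)
      · cases Sum.inl_injective hcb; exact adj_uv.2 hc.symm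
      · exact absurd hcb (by simp)
  · constructor
    · intro h; exact absurd h (adj_uu (G := G))
    · rintro (⟨c, _, hcb⟩ | hcb) <;> exact absurd hcb (by simp)
  · rcases t
    constructor
    · intro _; exact Or.inr rfl
    · intro _; exact adj_uw (G := G)

end MycAux

namespace MycAux

variable {V : Type u} {G : SimpleGraph V}

section Card
variable [Finite V]

lemma ncard_nb_rt : ((myc G).neighborSet rt).ncard = Nat.card V := by
  rw [nb_rt, ← Set.image_univ, Set.ncard_image_of_injective _ uL_inj, Set.ncard_univ]

lemma ncard_nb_v (a : V) :
    ((myc G).neighborSet (vL a)).ncard = 2 * (G.neighborSet a).ncard := by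
  rw [nb_v, Set.ncard_union_eq, Set.ncard_image_of_injective _ vL_inj,
    Set.ncard_image_of_injective _ uL_inj]
  · ring
  · rw [Set.disjoint_left]
    rintro x ⟨c, -, rfl⟩ ⟨d, -, hd⟩
    exact absurd hd (by simp)

lemma ncard_nb_u (a : V) :
    ((myc G).neighborSet (uL a)).ncard = (G.neighborSet a).ncard + 1 := by
  rw [nb_u, Set.ncard_union_eq, Set.ncard_image_of_injective _ vL_inj, Set.ncard_singleton]
  rw [Set.disjoint_left]
  rintro x ⟨c, -, rfl⟩ hx
  rw [Set.mem_singleton_iff] at hx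
  exact absurd hx (by simp)

end Card

/-- image of a neighborhood under a graph automorphism -/
lemma iso_image_nb {W : Type*} {H : SimpleGraph W} (φ : H ≃g H) (x : W) :
    ⇑φ '' H.neighborSet x = H.neighborSet (φ x) := by
  ext y
  constructor
  · rintro ⟨z, hz, rfl⟩; exact φ.map_adj_iff.2 hz
  · intro hy
    refine ⟨φ.symm y, ?_, by simp⟩
    have : H.Adj (φ x) (φ (φ.symm y)) := by simpa using hy
    exact φ.map_adj_iff.1 this

lemma iso_ncard_nb {W : Type*} {H : SimpleGraph W} (φ : H ≃g H) (x : W) :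
    (H.neighborSet (φ x)).ncard = (H.neighborSet x).ncard := by
  rw [← iso_image_nb φ x]
  exact Set.ncard_image_of_injective _ (RelIso.injective φ)

/-- G is a star with center b -/
def StarLike (G : SimpleGraph V) (b : V) : Prop :=
  (∀ x, x ≠ b → G.Adj b x) ∧ (∀ x y, G.Adj x y → x = b ∨ y = b)

section LemA
variable [Finite V]

lemma starOfU (hn : 3 ≤ Nat.card V) (φ : myc G ≃g myc G) (b : V)
    (hb : φ rt = uL b) : StarLike G b := by
  have himg : ⇑φ '' Set.range (uL : V → _) = vL '' G.neighborSet b ∪ {rt} := by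
    rw [← nb_rt, iso_image_nb, hb, nb_u]
  -- independence of N(b)
  have hindep : ∀ x ∈ G.neighborSet b, ∀ y ∈ G.neighborSet b, x ≠ y → ¬ G.Adj x y := by
    intro x hx y hy hxy hadj
    have hx' : (vL x : V ⊕ V ⊕ PUnit) ∈ ⇑φ '' Set.range uL := by
      rw [himg]; exact Or.inl ⟨x, hx, rfl⟩
    have hy' : (vL y : V ⊕ V ⊕ PUnit) ∈ ⇑φ '' Set.range uL := by
      rw [himg]; exact Or.inl ⟨y, hy, rfl⟩
    obtain ⟨p, ⟨p', rfl⟩, hp⟩ := hx'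
    obtain ⟨q, ⟨q', rfl⟩, hq⟩ := hy'
    have : (myc G).Adj (uL p') (uL q') := by
      rw [← φ.map_adj_iff, hp, hq]
      exact adj_vv.2 hadj
    exact adj_uu this
  -- N(b) = {b}ᶜ
  have hdeg : (G.neighborSet b).ncard + 1 = Nat.card V := by
    have h1 : ((myc G).neighborSet (φ rt)).ncard = ((myc G).neighborSet rt).ncard :=
      iso_ncard_nb φ rt
    rw [hb, ncard_nb_u, ncard_nb_rt] at h1
    exact h1
  have hsub : G.neighborSet b ⊆ {b}ᶜ := by
    intro x hx
    simp only [Set.mem_compl_iff, Set.mem_singleton_iff]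
    rintro rfl
    exact G.irrefl hx
  have hcompl : ({b}ᶜ : Set V).ncard + 1 = Nat.card V := by
    have := Set.ncard_add_ncard_compl ({b} : Set V)
    rw [Set.ncard_singleton] at this
    omega
  have hNb : G.neighborSet b = {b}ᶜ :=
    Set.eq_of_subset_of_ncard_le hsub (by omega)
  constructor
  · intro x hx
    have : x ∈ G.neighborSet b := by rw [hNb]; simpa using hx
    exact this
  · intro x y hxy
    by_contra hcon
    push_neg at hcon
    refine hindep x ?_ y ?_ hxy.ne hxy
    · rw [hNb]; simpa using hcon.1
    · rw [hNb]; simpa using hcon.2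

theorem root_fixed (hn : 3 ≤ Nat.card V) (hns : ¬ ∃ b, StarLike G b)
    (φ : myc G ≃g myc G) : φ rt = rt := by
  by_contra hne
  -- φ rt is not in the u-layer
  have hnotu : ∀ (ψ : myc G ≃g myc G) (b : V), ψ rt ≠ uL b := by
    intro ψ b h
    exact hns ⟨b, starOfU hn ψ b h⟩
  -- so φ rt = vL i
  obtain ⟨i, hi⟩ : ∃ i, φ rt = vL i := by
    rcases h : φ rt with a | a | t
    · exact ⟨a, rfl⟩
    · exact absurd h (hnotu φ a)
    · rcases t; exact absurd h hne
  obtain ⟨j, hj⟩ : ∃ j, φ.symm rt = vL j := by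
    rcases h : φ.symm rt with a | a | t
    · exact ⟨a, rfl⟩
    · exact absurd h (hnotu φ.symm a)
    · rcases t
      have : φ rt = rt := by
        have := congrArg φ h; simpa using this.symm
      exact absurd this hne
  -- φ maps the u-layer onto N(vL i)
  have himgU : ⇑φ '' Set.range (uL : V → _) = (myc G).neighborSet (vL i) := by
    rw [← nb_rt, iso_image_nb, hi]
  -- x := φ.symm (uL i) is in the v-layer
  obtain ⟨a, ha⟩ : ∃ a, φ.symm (uL i) = vL a := by
    rcases h : φ.symm (uL i) with z | z | t
    · exact ⟨z, rfl⟩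
    · exfalso
      have : φ (uL z) = uL i := by
        have := congrArg φ h; simpa using this.symm
      have hmem : (uL i : V ⊕ V ⊕ PUnit) ∈ (myc G).neighborSet (vL i) := by
        rw [← himgU]
        exact ⟨uL z, ⟨z, rfl⟩, this⟩
      have : (myc G).Adj (vL i) (uL i) := hmem
      rw [adj_vu] at this
      exact G.irrefl this
    · exfalso; rcases t
      have : φ rt = uL i := by
        have := congrArg φ h; simpa using this.symm
      exact hnotu φ i this
  have hfa : φ (vL a) = uL i := by rw [← ha]; simp
  -- N_G(a) = {j}
  have hNa : G.neighborSet a = {j} := by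
    have himga : ⇑φ '' (myc G).neighborSet (vL a) = (myc G).neighborSet (uL i) := by
      rw [iso_image_nb, hfa]
    ext c
    simp only [Set.mem_singleton_iff]
    constructor
    · intro hc
      have hc1 : (vL c : V ⊕ V ⊕ PUnit) ∈ (myc G).neighborSet (vL a) := by
        rw [nb_v]; exact Or.inl ⟨c, hc, rfl⟩
      have hc2 : φ (vL c) ∈ (myc G).neighborSet (uL i) := by
        rw [← himga]; exact ⟨vL c, hc1, rfl⟩
      rw [nb_u] at hc2
      rcases hc2 with ⟨l, hl, hlc⟩ | hw
      · exfalso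
        have : (vL l : V ⊕ V ⊕ PUnit) ∈ (myc G).neighborSet (vL i) := by
          rw [nb_v]; exact Or.inl ⟨l, hl, rfl⟩
        rw [← himgU] at this
        obtain ⟨z, ⟨z', rfl⟩, hz⟩ := this
        rw [hlc] at hz
        have := φ.injective hz
        simp at this
      · rw [Set.mem_singleton_iff] at hw
        have : vL c = φ.symm rt := by rw [← hw]; simp
        rw [hj] at this
        exact Sum.inl_injective this
    · rintro rfl
      have : (rt : V ⊕ V ⊕ PUnit) ∈ (myc G).neighborSet (uL i) := adj_uw (G := G)
      rw [← himga] at this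
      obtain ⟨z, hz, hz2⟩ := this
      have : z = φ.symm rt := by rw [← hz2]; simp
      rw [hj] at this
      subst this
      have : (myc G).Adj (vL a) (vL c) := hz
      exact adj_vv.1 this
  -- degree computations
  have hd1 : (G.neighborSet i).ncard + 1 = 2 * (G.neighborSet a).ncard := by
    have := iso_ncard_nb φ (vL a)
    rw [hfa, ncard_nb_u, ncard_nb_v] at this
    exact this
  have hd2 : 2 * (G.neighborSet i).ncard = Nat.card V := by
    have := iso_ncard_nb φ rt
    rw [hi, ncard_nb_v, ncard_nb_rt] at this
    exact this
  rw [hNa, Set.ncard_singleton] at hd1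
  omega

end LemA

end MycAux

namespace MycAux

variable {V : Type u} {G : SimpleGraph V} {k : ℕ}

open scoped Classical in
/-- color of a pair of G-vertices -/
noncomputable def pcol (c : G.edgeSet → Fin k) (d₀ : Fin k) (a b : V) : Fin k :=
  if h : G.Adj a b then c ⟨s(a, b), h⟩ else d₀

lemma pcol_adj (c : G.edgeSet → Fin k) (d₀ : Fin k) {a b : V} (h : G.Adj a b) :
    pcol c d₀ a b = c ⟨s(a, b), h⟩ := dif_pos h

lemma pcol_symm (c : G.edgeSet → Fin k) (d₀ : Fin k) (a b : V) :
    pcol c d₀ a b = pcol c d₀ b a := by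
  by_cases h : G.Adj a b
  · rw [pcol_adj c d₀ h, pcol_adj c d₀ h.symm]
    congr 1
    exact Subtype.ext (Sym2.eq_swap)
  · unfold pcol
    rw [dif_neg h, dif_neg (fun h' => h h'.symm)]

/-- symmetric color function on Mycielskian vertices -/
noncomputable def mFun (c : G.edgeSet → Fin k) (d₀ : Fin k) :
    (V ⊕ V ⊕ PUnit.{u+1}) → (V ⊕ V ⊕ PUnit.{u+1}) → Fin k := fun x y =>
  match x, y with
  | Sum.inl a, Sum.inl b => pcol c d₀ a b
  | Sum.inl a, Sum.inr (Sum.inl b) => pcol c d₀ a b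
  | Sum.inr (Sum.inl a), Sum.inl b => pcol c d₀ a b
  | _, _ => d₀

lemma mFun_symm (c : G.edgeSet → Fin k) (d₀ : Fin k) :
    ∀ x y, mFun c d₀ x y = mFun c d₀ y x := by
  rintro (a | a | t) (b | b | t') <;> simp [mFun, pcol_symm]

/-- The coloring of the Mycielskian induced by an edge coloring of G. -/
noncomputable def mycColor (c : G.edgeSet → Fin k) (d₀ : Fin k) :
    (myc G).edgeSet → Fin k := fun e =>
  Sym2.lift ⟨mFun c d₀, mFun_symm c d₀⟩ e.val

lemma mycColor_A {c : G.edgeSet → Fin k} {d₀ : Fin k} {a b : V}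
    (h : (myc G).Adj (vL a) (vL b)) :
    mycColor c d₀ ⟨s(vL a, vL b), h⟩ = c ⟨s(a, b), adj_vv.1 h⟩ := by
  show Sym2.lift _ s(vL a, vL b) = _
  rw [Sym2.lift_mk]
  exact pcol_adj c d₀ (adj_vv.1 h)

lemma mycColor_B {c : G.edgeSet → Fin k} {d₀ : Fin k} {a b : V}
    (h : (myc G).Adj (uL a) (vL b)) :
    mycColor c d₀ ⟨s(uL a, vL b), h⟩ = c ⟨s(a, b), (adj_uv.1 h).symm⟩ := by
  show Sym2.lift _ s(uL a, vL b) = _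
  rw [Sym2.lift_mk]
  show pcol c d₀ a b = _
  exact pcol_adj c d₀ (adj_uv.1 h).symm

lemma mycColor_B' {c : G.edgeSet → Fin k} {d₀ : Fin k} {a b : V}
    (h : (myc G).Adj (vL a) (uL b)) :
    mycColor c d₀ ⟨s(vL a, uL b), h⟩ = c ⟨s(a, b), adj_vu.1 h⟩ := by
  show Sym2.lift _ s(vL a, uL b) = _
  rw [Sym2.lift_mk]
  show pcol c d₀ a b = _
  exact pcol_adj c d₀ (adj_vu.1 h)

lemma mycColor_C {c : G.edgeSet → Fin k} {d₀ : Fin k} {a : V}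
    (h : (myc G).Adj (uL a) rt) :
    mycColor c d₀ ⟨s(uL a, rt), h⟩ = d₀ := by
  show Sym2.lift _ s(uL a, rt) = _
  rw [Sym2.lift_mk]
  rfl

lemma mapEdgeSet_val {W : Type*} {H : SimpleGraph W} (φ : H ≃g H) {x y : W}
    (h : H.Adj x y) :
    φ.mapEdgeSet ⟨s(x, y), h⟩ = ⟨s(φ x, φ y), φ.map_adj_iff.2 h⟩ := by
  apply Subtype.ext
  show Sym2.map φ s(x, y) = s(φ x, φ y)
  exact Sym2.map_pair_eq φ x y

end MycAux

namespace MycAux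

variable {V : Type u} {G : SimpleGraph V} {k : ℕ}

section NonStar
variable [Finite V]

theorem nonStar_dist (hn : 3 ≤ Nat.card V) (hns : ¬ ∃ b, StarLike G b)
    (c : G.edgeSet → Fin k) (hc : IsDistEdgeColoring G c) (d₀ : Fin k) :
    IsDistEdgeColoring (myc G) (mycColor c d₀) := by
  intro φ hpres
  have hrt : φ rt = rt := root_fixed hn hns φ
  -- u-layer preserved
  have hU : ∀ a : V, ∃ b, φ (uL a) = uL b := by
    intro a
    have h1 : (myc G).Adj rt (φ (uL a)) := by
      rw [← hrt, φ.map_adj_iff]; exact adj_wu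
    have h2 : φ (uL a) ∈ (myc G).neighborSet rt := h1
    rw [nb_rt] at h2
    obtain ⟨b, hb⟩ := h2
    exact ⟨b, hb.symm⟩
  -- v-layer preserved
  have hV : ∀ a : V, ∃ b, φ (vL a) = vL b := by
    intro a
    rcases h : φ (vL a) with b | b | t
    · exact ⟨b, rfl⟩
    · exfalso
      have hb : (uL b : V ⊕ V ⊕ PUnit) ∈ (myc G).neighborSet rt := adj_wu (G := G)
      rw [← hrt] at hb
      rw [← iso_image_nb φ rt, nb_rt] at hb
      obtain ⟨z, ⟨z', rfl⟩, hz⟩ := hb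
      rw [show Sum.inr (Sum.inl b) = (uL b : V ⊕ V ⊕ PUnit) from rfl, ← hz] at h
      have := φ.injective h
      simp at this
    · exfalso; rcases t
      rw [show Sum.inr (Sum.inr PUnit.unit) = (rt : V ⊕ V ⊕ PUnit) from rfl, ← hrt] at h
      have := φ.injective h
      simp [vL, rt] at this
  set π : V → V := fun a => Classical.choose (hV a) with hπdef
  have hπ : ∀ a, φ (vL a) = vL (π a) := fun a => Classical.choose_spec (hV a)
  set τ : V → V := fun a => Classical.choose (hU a) with hτdef
  have hτ : ∀ a, φ (uL a) = uL (τ a) := fun a => Classical.choose_spec (hU a)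
  -- π is a color-preserving automorphism
  have hπinj : Function.Injective π := by
    intro a b hab
    have : φ (vL a) = φ (vL b) := by rw [hπ a, hπ b, hab]
    exact vL_inj (φ.injective this)
  have hπbij := Finite.injective_iff_bijective.mp hπinj
  let πE : V ≃ V := Equiv.ofBijective π hπbij
  have hπadj : ∀ a b, G.Adj (π a) (π b) ↔ G.Adj a b := by
    intro a b
    rw [← adj_vv (G := G), ← hπ a, ← hπ b, φ.map_adj_iff, adj_vv]
  let πIso : G ≃g G := ⟨πE, by intro a b; exact hπadj a b⟩
  have hcπ : ∀ e : G.edgeSet, c (πIso.mapEdgeSet e) = c e := by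
    rintro ⟨e, he⟩
    induction e using Sym2.ind with
    | _ x y =>
      rw [mapEdgeSet_val πIso he]
      have heq : (⟨s(φ (vL x), φ (vL y)), φ.map_adj_iff.2 (adj_vv.2 he)⟩ :
          (myc G).edgeSet) = ⟨s(vL (π x), vL (π y)), adj_vv.2 ((hπadj x y).2 he)⟩ :=
        Subtype.ext (by show s(φ (vL x), φ (vL y)) = _; rw [hπ x, hπ y])
      calc c ⟨s(π x, π y), _⟩
          = mycColor c d₀ ⟨s(vL (π x), vL (π y)), adj_vv.2 ((hπadj x y).2 he)⟩ :=
            (mycColor_A _).symm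
        _ = mycColor c d₀ ⟨s(φ (vL x), φ (vL y)), φ.map_adj_iff.2 (adj_vv.2 he)⟩ :=
            (congrArg _ heq).symm
        _ = mycColor c d₀ (φ.mapEdgeSet ⟨s(vL x, vL y), adj_vv.2 he⟩) := by
            rw [mapEdgeSet_val φ]
        _ = mycColor c d₀ ⟨s(vL x, vL y), adj_vv.2 he⟩ := hpres _
        _ = c ⟨s(x, y), he⟩ := mycColor_A _
  have hπid : ∀ a, π a = a := hc πIso hcπ
  have hπ' : ∀ a, φ (vL a) = vL a := fun a => by rw [hπ a, hπid a]
  -- τ is a color-preserving automorphism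
  have hrule : ∀ a b, G.Adj (τ a) b ↔ G.Adj a b := by
    intro a b
    have : (myc G).Adj (uL (τ a)) (vL b) ↔ (myc G).Adj (uL a) (vL b) := by
      rw [← hτ a, ← φ.map_adj_iff (v := uL a) (w := vL b), hπ' b]
    rw [adj_uv, adj_uv] at this
    rw [G.adj_comm, this, G.adj_comm]
  have hτinj : Function.Injective τ := by
    intro a b hab
    have : φ (uL a) = φ (uL b) := by rw [hτ a, hτ b, hab]
    exact uL_inj (φ.injective this)
  have hτbij := Finite.injective_iff_bijective.mp hτinj
  have hτadj : ∀ a b, G.Adj (τ a) (τ b) ↔ G.Adj a b := by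
    intro a b
    rw [hrule a (τ b), G.adj_comm a (τ b), hrule b a, G.adj_comm b a]
  let τIso : G ≃g G := ⟨Equiv.ofBijective τ hτbij, by intro a b; exact hτadj a b⟩
  have hcτpair : ∀ (x y : V) (h : G.Adj x y),
      c ⟨s(τ x, y), (hrule x y).2 h⟩ = c ⟨s(x, y), h⟩ := by
    intro x y h
    have heq : (⟨s(φ (uL x), φ (vL y)), φ.map_adj_iff.2 (adj_uv.2 h.symm)⟩ :
        (myc G).edgeSet) = ⟨s(uL (τ x), vL y), adj_uv.2 ((hrule x y).2 h).symm⟩ :=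
      Subtype.ext (by show s(φ (uL x), φ (vL y)) = _; rw [hτ x, hπ' y])
    calc c ⟨s(τ x, y), _⟩
        = mycColor c d₀ ⟨s(uL (τ x), vL y), adj_uv.2 ((hrule x y).2 h).symm⟩ :=
          (mycColor_B _).symm
      _ = mycColor c d₀ ⟨s(φ (uL x), φ (vL y)), φ.map_adj_iff.2 (adj_uv.2 h.symm)⟩ :=
          (congrArg _ heq).symm
      _ = mycColor c d₀ (φ.mapEdgeSet ⟨s(uL x, vL y), adj_uv.2 h.symm⟩) := by
          rw [mapEdgeSet_val φ]
      _ = mycColor c d₀ ⟨s(uL x, vL y), adj_uv.2 h.symm⟩ := hpres _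
      _ = c ⟨s(x, y), h⟩ := mycColor_B _
  have hcτ : ∀ e : G.edgeSet, c (τIso.mapEdgeSet e) = c e := by
    rintro ⟨e, he⟩
    induction e using Sym2.ind with
    | _ x y =>
      rw [mapEdgeSet_val τIso he]
      show c ⟨s(τ x, τ y), _⟩ = _
      have h1 : G.Adj x (τ y) := (hrule x (τ y)).1 ((hτadj x y).2 he)
      have e1 : c ⟨s(τ x, τ y), (hτadj x y).2 he⟩ = c ⟨s(x, τ y), h1⟩ := hcτpair x (τ y) h1
      have e2 : (⟨s(x, τ y), h1⟩ : G.edgeSet) = ⟨s(τ y, x), h1.symm⟩ :=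
        Subtype.ext Sym2.eq_swap
      have e3 : c ⟨s(τ y, x), h1.symm⟩ = c ⟨s(y, x), he.symm⟩ := hcτpair y x he.symm
      have e4 : (⟨s(y, x), he.symm⟩ : G.edgeSet) = ⟨s(x, y), he⟩ :=
        Subtype.ext Sym2.eq_swap
      rw [e1, e2, e3, e4]
  have hτid : ∀ a, τ a = a := hc τIso hcτ
  intro v
  rcases v with a | a | t
  · exact hπ' a
  · rw [hτ a, hτid a]
  · rcases t; exact hrt

end NonStar

end MycAux

namespace MycAux

variable {V : Type u} {G : SimpleGraph V} {k : ℕ}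

section Star

lemma star_adj {b : V} (hb : StarLike G b) (x y : V) :
    G.Adj x y ↔ x ≠ y ∧ (x = b ∨ y = b) := by
  constructor
  · intro h; exact ⟨h.ne, hb.2 x y h⟩
  · rintro ⟨hxy, rfl | rfl⟩
    · exact hb.1 y (fun h => hxy h.symm)
    · exact (hb.1 x hxy).symm

lemma star_nb_center {b : V} (hb : StarLike G b) : G.neighborSet b = {b}ᶜ := by
  ext x
  simp only [SimpleGraph.mem_neighborSet, Set.mem_compl_iff, Set.mem_singleton_iff]
  constructor
  · intro h he; exact G.irrefl (he ▸ h)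
  · intro h; exact hb.1 x h

lemma star_nb_leaf {b l : V} (hb : StarLike G b) (hl : l ≠ b) :
    G.neighborSet l = {b} := by
  ext x
  simp only [SimpleGraph.mem_neighborSet, Set.mem_singleton_iff, star_adj hb]
  constructor
  · rintro ⟨hne, rfl | rfl⟩
    · exact absurd rfl hl
    · rfl
  · rintro rfl; exact ⟨hl, Or.inr rfl⟩

lemma star_cinj {b : V} (hb : StarLike G b) (c : G.edgeSet → Fin k)
    (hc : IsDistEdgeColoring G c) : Function.Injective c := by
  haveI := Classical.decEq V
  -- every edge has the form s(b, l)
  have hrep : ∀ e : G.edgeSet, ∃ l, ∃ h : G.Adj b l, e = ⟨s(b, l), h⟩ := by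
    rintro ⟨e, he⟩
    induction e using Sym2.ind with
    | _ x y =>
      rcases hb.2 x y he with rfl | rfl
      · exact ⟨y, he, rfl⟩
      · exact ⟨x, he.symm, Subtype.ext Sym2.eq_swap⟩
  intro e1 e2 hce
  obtain ⟨l1, h1, rfl⟩ := hrep e1
  obtain ⟨l2, h2, rfl⟩ := hrep e2
  by_cases hl : l1 = l2
  · subst hl; rfl
  · exfalso
    have hb1 : l1 ≠ b := fun h => G.irrefl (h ▸ h1)
    have hb2 : l2 ≠ b := fun h => G.irrefl (h ▸ h2)
    -- swap automorphism
    have hswapb : ∀ x : V, Equiv.swap l1 l2 x = b ↔ x = b := by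
      intro x
      constructor
      · intro h
        have hbb : Equiv.swap l1 l2 b = b :=
          Equiv.swap_apply_of_ne_of_ne (fun h => hb1 h.symm) (fun h => hb2 h.symm)
        exact (Equiv.swap l1 l2).injective (h.trans hbb.symm)
      · rintro rfl
        exact Equiv.swap_apply_of_ne_of_ne (fun h => hb1 h.symm) (fun h => hb2 h.symm)
    let σ : G ≃g G := ⟨Equiv.swap l1 l2, by
      intro x y
      rw [star_adj hb, star_adj hb]
      constructor
      · rintro ⟨hne, h | h⟩
        · exact ⟨fun h' => hne (h' ▸ rfl), Or.inl ((hswapb x).1 h)⟩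
        · exact ⟨fun h' => hne (h' ▸ rfl), Or.inr ((hswapb y).1 h)⟩
      · rintro ⟨hne, h | h⟩
        · exact ⟨fun h' => hne ((Equiv.swap l1 l2).injective h'), Or.inl ((hswapb x).2 h)⟩
        · exact ⟨fun h' => hne ((Equiv.swap l1 l2).injective h'), Or.inr ((hswapb y).2 h)⟩⟩
    have hcσ : ∀ e : G.edgeSet, c (σ.mapEdgeSet e) = c e := by
      intro e
      obtain ⟨l, hl', rfl⟩ := hrep e
      rw [mapEdgeSet_val σ]
      have hσb : σ b = b := (hswapb b).2 rfl
      by_cases h1' : l = l1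
      · subst h1'
        have : σ l = l2 := Equiv.swap_apply_left l l2
        have heq : (⟨s(σ b, σ l), σ.map_adj_iff.2 hl'⟩ : G.edgeSet) = ⟨s(b, l2), h2⟩ :=
          Subtype.ext (by show s(σ b, σ l) = _; rw [hσb, this])
        exact (congrArg c heq).trans hce.symm
      · by_cases h2' : l = l2
        · subst h2'
          have : σ l = l1 := Equiv.swap_apply_right l1 l
          have heq : (⟨s(σ b, σ l), σ.map_adj_iff.2 hl'⟩ : G.edgeSet) = ⟨s(b, l1), h1⟩ :=
            Subtype.ext (by show s(σ b, σ l) = _; rw [hσb, this])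
          exact (congrArg c heq).trans hce
        · have : σ l = l := Equiv.swap_apply_of_ne_of_ne h1' h2'
          have heq : (⟨s(σ b, σ l), σ.map_adj_iff.2 hl'⟩ : G.edgeSet) = ⟨s(b, l), hl'⟩ :=
            Subtype.ext (by show s(σ b, σ l) = _; rw [hσb, this])
          exact congrArg c heq
    have := hc σ hcσ l1
    have hσl1 : Equiv.swap l1 l2 l1 = l2 := Equiv.swap_apply_left l1 l2
    exact hl ((hσl1.symm.trans this).symm)

end Star

end MycAux

namespace MycAux

variable {V : Type u} {G : SimpleGraph V} {k : ℕ}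

section Star2
variable [Finite V]

theorem star_dist (hn : 3 ≤ Nat.card V) {b : V} (hb : StarLike G b)
    (c : G.edgeSet → Fin k) (hc : IsDistEdgeColoring G c) {l₀ : V} (hl₀ : l₀ ≠ b) :
    IsDistEdgeColoring (myc G) (mycColor c (c ⟨s(b, l₀), hb.1 l₀ hl₀⟩)) := by
  intro φ hpres
  haveI := Classical.decEq V
  set d₀ := c ⟨s(b, l₀), hb.1 l₀ hl₀⟩ with hd₀
  have cinj := star_cinj hb c hc
  set n := Nat.card V with hndef
  have hnb : (G.neighborSet b).ncard + 1 = n := by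
    rw [star_nb_center hb]
    have := Set.ncard_add_ncard_compl ({b} : Set V)
    rw [Set.ncard_singleton] at this; omega
  have hnl : ∀ l, l ≠ b → (G.neighborSet l).ncard = 1 := fun l hl => by
    rw [star_nb_leaf hb hl, Set.ncard_singleton]
  -- Step 1 : φ fixes the star center
  have hvb : φ (vL b) = vL b := by
    have hD := iso_ncard_nb φ (vL b)
    rw [ncard_nb_v] at hD
    rcases h : φ (vL b) with z | z | t
    · by_cases hz : z = b
      · rw [← hz]
      · exfalso; rw [h] at hD
        rw [show (Sum.inl z : V ⊕ V ⊕ PUnit.{u+1}) = vL z from rfl, ncard_nb_v,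
          hnl z hz] at hD
        omega
    · exfalso; rw [h] at hD
      rw [show (Sum.inr (Sum.inl z) : V ⊕ V ⊕ PUnit.{u+1}) = uL z from rfl,
        ncard_nb_u] at hD
      by_cases hz : z = b
      · rw [hz] at hD; omega
      · rw [hnl z hz] at hD; omega
    · exfalso; rcases t; rw [h] at hD
      rw [show (Sum.inr (Sum.inr PUnit.unit) : V ⊕ V ⊕ PUnit.{u+1}) = rt from rfl,
        ncard_nb_rt] at hD
      omega
  -- Step 2 : any automorphism sends the root to rt or uL b
  have hrtcase : ∀ ψ : myc G ≃g myc G, ψ rt = rt ∨ ψ rt = uL b := by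
    intro ψ
    have hD := iso_ncard_nb ψ rt
    rw [ncard_nb_rt] at hD
    rcases h : ψ rt with z | z | t
    · exfalso; rw [h] at hD
      rw [show (Sum.inl z : V ⊕ V ⊕ PUnit.{u+1}) = vL z from rfl, ncard_nb_v] at hD
      by_cases hz : z = b
      · rw [hz] at hD; omega
      · rw [hnl z hz] at hD; omega
    · by_cases hz : z = b
      · right; rw [← hz]
      · exfalso; rw [h] at hD
        rw [show (Sum.inr (Sum.inl z) : V ⊕ V ⊕ PUnit.{u+1}) = uL z from rfl,
          ncard_nb_u, hnl z hz] at hD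
        omega
    · left; rcases t; rfl
  rcases hrtcase φ with hrt | hrt
  · -- root fixed: usual analysis
    have hub : φ (uL b) = uL b := by
      have hD := iso_ncard_nb φ (uL b)
      rw [ncard_nb_u] at hD
      rcases h : φ (uL b) with z | z | t
      · exfalso; rw [h] at hD
        rw [show (Sum.inl z : V ⊕ V ⊕ PUnit.{u+1}) = vL z from rfl, ncard_nb_v] at hD
        by_cases hz : z = b
        · rw [hz] at hD; omega
        · rw [hnl z hz] at hD; omega
      · by_cases hz : z = b
        · rw [← hz]
        · exfalso; rw [h] at hD
          rw [show (Sum.inr (Sum.inl z) : V ⊕ V ⊕ PUnit.{u+1}) = uL z from rfl,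
            ncard_nb_u, hnl z hz] at hD
          omega
      · exfalso; rcases t
        have h2 : φ (uL b) = rt := h
        rw [← hrt] at h2
        have := φ.injective h2
        simp [uL, rt] at this
    have hUtau : ∀ l, l ≠ b → φ (uL l) = uL l := by
      intro l hl
      have h1 : (myc G).Adj rt (φ (uL l)) := by
        rw [← hrt, φ.map_adj_iff]; exact adj_wu
      have h2 : φ (uL l) ∈ (myc G).neighborSet rt := h1
      rw [nb_rt] at h2
      obtain ⟨z, hz⟩ := h2
      have hadj : (myc G).Adj (vL b) (uL l) := adj_vu.2 (hb.1 l hl)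
      have hadj2 : (myc G).Adj (vL b) (uL z) := by
        rw [← hvb, hz]; exact φ.map_adj_iff.2 hadj
      have key : c ⟨s(b, z), adj_vu.1 hadj2⟩ = c ⟨s(b, l), adj_vu.1 hadj⟩ := by
        calc c ⟨s(b, z), adj_vu.1 hadj2⟩
            = mycColor c d₀ ⟨s(vL b, uL z), hadj2⟩ := (mycColor_B' hadj2).symm
          _ = mycColor c d₀ ⟨s(φ (vL b), φ (uL l)), φ.map_adj_iff.2 hadj⟩ :=
              congrArg _ (Subtype.ext (by show s(vL b, uL z) = s(φ (vL b), φ (uL l)); rw [hvb, hz]))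
          _ = mycColor c d₀ (φ.mapEdgeSet ⟨s(vL b, uL l), hadj⟩) := by
              rw [mapEdgeSet_val]
          _ = mycColor c d₀ ⟨s(vL b, uL l), hadj⟩ := hpres _
          _ = c ⟨s(b, l), adj_vu.1 hadj⟩ := mycColor_B' hadj
      have hsub := cinj key
      have hzl : z = l := Sym2.congr_right.1 (congrArg Subtype.val hsub)
      rw [← hz, hzl]
    have hVs : ∀ l, l ≠ b → φ (vL l) = vL l := by
      intro l hl
      have hadj : (myc G).Adj (uL b) (vL l) := adj_uv.2 (hb.1 l hl).symm
      have h1 : (myc G).Adj (uL b) (φ (vL l)) := by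
        rw [← hub, φ.map_adj_iff]; exact hadj
      have h2 : φ (vL l) ∈ (myc G).neighborSet (uL b) := h1
      rw [nb_u] at h2
      rcases h2 with ⟨z, hzmem, hz⟩ | hzr
      · have hadj2 : (myc G).Adj (uL b) (vL z) := by
          rw [← hub, hz]; exact φ.map_adj_iff.2 hadj
        have key : c ⟨s(b, z), (adj_uv.1 hadj2).symm⟩ = c ⟨s(b, l), (adj_uv.1 hadj).symm⟩ := by
          calc c ⟨s(b, z), (adj_uv.1 hadj2).symm⟩
              = mycColor c d₀ ⟨s(uL b, vL z), hadj2⟩ := (mycColor_B hadj2).symm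
            _ = mycColor c d₀ ⟨s(φ (uL b), φ (vL l)), φ.map_adj_iff.2 hadj⟩ :=
                congrArg _ (Subtype.ext (by show s(uL b, vL z) = s(φ (uL b), φ (vL l)); rw [hub, hz]))
            _ = mycColor c d₀ (φ.mapEdgeSet ⟨s(uL b, vL l), hadj⟩) := by
                rw [mapEdgeSet_val]
            _ = mycColor c d₀ ⟨s(uL b, vL l), hadj⟩ := hpres _
            _ = c ⟨s(b, l), (adj_uv.1 hadj).symm⟩ := mycColor_B hadj
        have hsub := cinj key
        have hzl : z = l := Sym2.congr_right.1 (congrArg Subtype.val hsub)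
        rw [← hz, hzl]
      · exfalso
        rw [Set.mem_singleton_iff] at hzr
        rw [← hrt] at hzr
        have := φ.injective hzr
        simp [vL, rt] at this
    intro v
    rcases v with a | a | t
    · by_cases ha : a = b
      · rw [ha]; exact hvb
      · exact hVs a ha
    · by_cases ha : a = b
      · rw [ha]; exact hub
      · exact hUtau a ha
    · rcases t; exact hrt
  · -- root moved to uL b: contradiction
    exfalso
    have hub2 : φ (uL b) = rt := by
      rcases hrtcase φ.symm with h | h
      · exfalso
        have := congrArg φ h
        rw [φ.apply_symm_apply] at this
        rw [← this] at hrt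
        simp [uL, rt] at hrt
      · have := congrArg φ h
        rw [φ.apply_symm_apply] at this
        exact this.symm
    have hto : ∀ l, l ≠ b → φ (uL l) = vL l₀ := by
      intro l hl
      -- φ (uL l) lands in the v-layer image of N(b)
      have h1 : (myc G).Adj (uL b) (φ (uL l)) := by
        rw [← hrt, φ.map_adj_iff]; exact adj_wu
      have h2 : φ (uL l) ∈ (myc G).neighborSet (uL b) := h1
      rw [nb_u] at h2
      rcases h2 with ⟨z, hzmem, hz⟩ | hzr
      · have hzb : z ≠ b := fun he => G.irrefl (he ▸ hzmem)
        have hadjC : (myc G).Adj (uL l) rt := adj_uw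
        have hadj2 : (myc G).Adj (vL z) (uL b) := by
          rw [← hrt, hz]; exact φ.map_adj_iff.2 hadjC
        have key : c ⟨s(z, b), adj_vu.1 hadj2⟩ = d₀ := by
          calc c ⟨s(z, b), adj_vu.1 hadj2⟩
              = mycColor c d₀ ⟨s(vL z, uL b), hadj2⟩ := (mycColor_B' hadj2).symm
            _ = mycColor c d₀ ⟨s(φ (uL l), φ rt), φ.map_adj_iff.2 hadjC⟩ :=
                congrArg _ (Subtype.ext (by show s(vL z, uL b) = s(φ (uL l), φ rt); rw [hz, hrt]))
            _ = mycColor c d₀ (φ.mapEdgeSet ⟨s(uL l, rt), hadjC⟩) := by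
                rw [mapEdgeSet_val]
            _ = mycColor c d₀ ⟨s(uL l, rt), hadjC⟩ := hpres _
            _ = d₀ := mycColor_C hadjC
        rw [hd₀] at key
        have hsub := cinj key
        have hpair : s(z, b) = s(b, l₀) := congrArg Subtype.val hsub
        rw [Sym2.eq_iff] at hpair
        have hzl : z = l₀ := by
          rcases hpair with ⟨h1', h2'⟩ | ⟨h1', h2'⟩
          · exact absurd h1' hzb
          · exact h1'
        rw [← hz, hzl]
      · exfalso
        rw [Set.mem_singleton_iff] at hzr
        rw [← hub2] at hzr
        have := φ.injective hzr
        have : l = b := by simpa [uL] using this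
        exact hl this
    -- two distinct leaves both map to vL l₀
    have hcompl : ({b}ᶜ : Set V).ncard + 1 = n := by
      have := Set.ncard_add_ncard_compl ({b} : Set V)
      rw [Set.ncard_singleton] at this; omega
    have h2lt : 1 < ({b}ᶜ : Set V).ncard := by omega
    obtain ⟨x, hx, y, hy, hxy⟩ := (Set.one_lt_ncard (Set.toFinite _)).1 h2lt
    rw [Set.mem_compl_iff, Set.mem_singleton_iff] at hx hy
    have e1 := hto x hx
    have e2 := hto y hy
    rw [← e2] at e1
    exact hxy (uL_inj (φ.injective e1))

end Star2

end MycAux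

namespace MycAux

variable {V : Type u}

/-- Key lemma: a distinguishing k-coloring of H yields one of myc H. -/
theorem keyLemma {W : Type u} [Finite W] {H : SimpleGraph W} (hn : 3 ≤ Nat.card W)
    {k : ℕ} (he : H.edgeSet.Nonempty) (c : H.edgeSet → Fin k)
    (hc : IsDistEdgeColoring H c) :
    ∃ c' : (myc H).edgeSet → Fin k, IsDistEdgeColoring (myc H) c' := by
  by_cases hstar : ∃ b, StarLike H b
  · obtain ⟨b, hb⟩ := hstar
    -- find a leaf l₀ ≠ b
    have hcompl : ({b}ᶜ : Set W).ncard + 1 = Nat.card W := by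
      have := Set.ncard_add_ncard_compl ({b} : Set W)
      rw [Set.ncard_singleton] at this; omega
    have hpos : 0 < ({b}ᶜ : Set W).ncard := by omega
    obtain ⟨l₀, hl₀⟩ := (Set.ncard_pos (Set.toFinite _)).1 hpos
    rw [Set.mem_compl_iff, Set.mem_singleton_iff] at hl₀
    exact ⟨_, star_dist hn hb c hc hl₀⟩
  · obtain ⟨e, hee⟩ := he
    exact ⟨_, nonStar_dist hn hstar c hc (c ⟨e, hee⟩)⟩

/-- existence of some distinguishing coloring -/
theorem exists_dist [Fintype V] (G : SimpleGraph V) [DecidableRel G.Adj]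
    (hK2 : ∀ x y : V, G.Adj x y → ¬(G.degree x = 1 ∧ G.degree y = 1))
    (hiso : ∀ x : V, G.degree x ≠ 0) :
    ∃ k, ∃ c : G.edgeSet → Fin k, IsDistEdgeColoring G c := by
  haveI := Classical.decEq V
  haveI : Fintype G.edgeSet := Set.Finite.fintype (Set.toFinite _)
  haveI := Classical.decEq G.edgeSet
  refine ⟨Fintype.card G.edgeSet, fun e => Fintype.equivFin _ e, ?_⟩
  intro φ hp
  have hfix : ∀ e : G.edgeSet, φ.mapEdgeSet e = e :=
    fun e => (Fintype.equivFin _).injective (hp e)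
  have hpair : ∀ x y (h : G.Adj x y), s(φ x, φ y) = s(x, y) := by
    intro x y h
    have := congrArg Subtype.val (hfix ⟨s(x, y), h⟩)
    rwa [mapEdgeSet_val φ h] at this
  have hdeg2 : ∀ v, 2 ≤ G.degree v → φ v = v := by
    intro v hv
    rw [← SimpleGraph.card_neighborFinset_eq_degree] at hv
    obtain ⟨x, hx, y, hy, hxy⟩ := Finset.one_lt_card.1 hv
    rw [SimpleGraph.mem_neighborFinset] at hx hy
    have h1 := hpair v x hx
    have h2 := hpair v y hy
    rw [Sym2.eq_iff] at h1 h2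
    rcases h1 with ⟨h, -⟩ | ⟨h1a, -⟩
    · exact h
    · rcases h2 with ⟨h, -⟩ | ⟨h2a, -⟩
      · exact h
      · exact absurd (h1a.symm.trans h2a) hxy
  intro v
  have hd := hiso v
  by_cases h2 : 2 ≤ G.degree v
  · exact hdeg2 v h2
  · -- degree 1
    have hd1 : G.degree v = 1 := by omega
    have hpos : 0 < G.degree v := by omega
    obtain ⟨x, hx⟩ := (G.degree_pos_iff_exists_adj v).1 hpos
    have hxd : 2 ≤ G.degree x := by
      have hne := hK2 v x hx
      have : G.degree x ≠ 0 := hiso x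
      have : G.degree x ≠ 1 := fun h => hne ⟨hd1, h⟩
      omega
    have hfx : φ x = x := hdeg2 x hxd
    have h1 := hpair v x hx
    rw [hfx, Sym2.eq_iff] at h1
    rcases h1 with ⟨h, -⟩ | ⟨-, hb⟩
    · exact h
    · exact absurd hb.symm hx.ne
  
/-- monotonicity in the number of colors -/
theorem mono_colors {W : Type u} {H : SimpleGraph W} {k k' : ℕ} (hkk : k ≤ k')
    (h : ∃ c : H.edgeSet → Fin k, IsDistEdgeColoring H c) :
    ∃ c : H.edgeSet → Fin k', IsDistEdgeColoring H c := by
  obtain ⟨c, hc⟩ := h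
  refine ⟨fun e => Fin.castLE hkk (c e), ?_⟩
  intro φ hp
  exact hc φ (fun e => Fin.castLE_injective hkk (hp e))

end MycAux

open MycAux in
theorem distIndex_iterMyc_le {V : Type u} [Fintype V] (G : SimpleGraph V)
    [DecidableRel G.Adj] (hcard : 3 ≤ Fintype.card V)
    (hK2 : ∀ x y : V, G.Adj x y → ¬(G.degree x = 1 ∧ G.degree y = 1))
    (hiso : ∀ x : V, G.degree x ≠ 0)
    (p : ℕ) (hp : 1 ≤ p) :
    distIndex (iterMyc G p).2 ≤ distIndex G := by
  -- the set of valid color counts for G is nonempty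
  have hne : {k : ℕ | ∃ c : G.edgeSet → Fin k, IsDistEdgeColoring G c}.Nonempty := by
    obtain ⟨k, c, hc⟩ := exists_dist G hK2 hiso
    exact ⟨k, c, hc⟩
  set k := distIndex G with hkdef
  have hkS : ∃ c : G.edgeSet → Fin k, IsDistEdgeColoring G c := Nat.sInf_mem hne
  -- finiteness of the iterated vertex types
  have hfin : ∀ p, Finite (iterMyc G p).1 := by
    intro p
    induction p with
    | zero => exact inferInstanceAs (Finite V)
    | succ p ih =>
      haveI := ih
      exact inferInstanceAs (Finite ((iterMyc G p).1 ⊕ (iterMyc G p).1 ⊕ PUnit.{u+1}))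
  have main : ∀ p, 3 ≤ Nat.card (iterMyc G p).1 ∧ (iterMyc G p).2.edgeSet.Nonempty ∧
      (∃ c : (iterMyc G p).2.edgeSet → Fin k, IsDistEdgeColoring (iterMyc G p).2 c) := by
    intro p
    induction p with
    | zero =>
      refine ⟨by rw [show (iterMyc G 0).1 = V from rfl, Nat.card_eq_fintype_card]; exact hcard, ?_, hkS⟩
      have : Nonempty V := by
        have : 0 < Fintype.card V := by omega
        exact Fintype.card_pos_iff.1 this
      obtain ⟨v⟩ := this
      have hdv : 0 < G.degree v := Nat.pos_of_ne_zero (hiso v)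
      obtain ⟨x, hx⟩ := (G.degree_pos_iff_exists_adj v).1 hdv
      exact ⟨s(v, x), hx⟩
    | succ p ih =>
      haveI := hfin p
      obtain ⟨h3, hne', hex⟩ := ih
      obtain ⟨c, hc⟩ := hex
      refine ⟨?_, ?_, keyLemma h3 hne' c hc⟩
      · show 3 ≤ Nat.card ((iterMyc G p).1 ⊕ (iterMyc G p).1 ⊕ PUnit.{u+1})
        rw [Nat.card_sum, Nat.card_sum]
        omega
      · have : Nonempty (iterMyc G p).1 := by
          have h0 : 0 < Nat.card (iterMyc G p).1 := by omega
          exact (Nat.card_pos_iff.1 h0).1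
        obtain ⟨a⟩ := this
        exact ⟨s(uL a, rt), adj_uw (G := (iterMyc G p).2)⟩
  obtain ⟨-, -, c', hc'⟩ := main p
  exact Nat.sInf_le ⟨c', hc'⟩
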